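/- arXiv:1906.06303 — 3 statements merged into one kernel-verified Lean document; each statement's English description precedes it below -/
import Mathlib

section
/- Let d ≥ 1 and let E ⊆ ℝ^d be measurable with finite Lebesgue measure. If σ ∈ (0,1), then Ĥ^σ(E) = H^σ_1(E) + J^σ_1(E) as elements of (−∞,+∞], where H^σ(E) := ∫_E ∫_{ℝ^d∖E} |x−y|^{−(d+σ)} dy dx and Ĥ^σ(E) := H^σ(E) − (dω_d/σ)|E|. If σ ∈ (−d,0), then Ĵ^σ(E) = H^σ_1(E) + J^σ_1(E), where J^σ(E) := −∫_E ∫_E |x−y|^{−(d+σ)} dy dx and Ĵ^σ(E) := J^σ(E) − (dω_d/σ)|E|. -/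
open MeasureTheory Metric Filter Topology ENNReal
open scoped symmDiff

noncomputable section

abbrev Rd (d : ℕ) := EuclideanSpace ℝ (Fin d)

/-- Lebesgue measure of the unit ball in `ℝ^d`. -/
def omegaD (d : ℕ) : ℝ := (volume (ball (0 : Rd d) 1)).toReal

/-- The kernel `|x-y|^{-(d+σ)}`. -/
def kerH (d : ℕ) (σ : ℝ) (x y : Rd d) : ℝ := ‖x - y‖ ^ (-((d : ℝ) + σ))

/-- `H^σ_ρ(E) = ∫_E ∫_{B_ρ(x)∖E} |x-y|^{-(d+σ)} dy dx ∈ [0,+∞]`. -/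
def Hfun (d : ℕ) (σ ρ : ℝ) (E : Set (Rd d)) : ℝ≥0∞ :=
  ∫⁻ x in E, ∫⁻ y in ball x ρ \ E, ENNReal.ofReal (kerH d σ x y)

/-- `J^σ_r(E) = -∫_E ∫_{E∖B_r(x)} |x-y|^{-(d+σ)} dy dx`. -/
def Jfun (d : ℕ) (σ r : ℝ) (E : Set (Rd d)) : ℝ :=
  -∫ x in E, ∫ y in E \ ball x r, kerH d σ x y

/-- `H^σ(E) = ∫_E ∫_{ℝ^d∖E} |x-y|^{-(d+σ)} dy dx`. -/
def HfunFull (d : ℕ) (σ : ℝ) (E : Set (Rd d)) : ℝ≥0∞ :=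
  ∫⁻ x in E, ∫⁻ y in Eᶜ, ENNReal.ofReal (kerH d σ x y)

/-- `J^σ(E) = -∫_E ∫_E |x-y|^{-(d+σ)} dy dx`. -/
def JfunFull (d : ℕ) (σ : ℝ) (E : Set (Rd d)) : ℝ :=
  -∫ x in E, ∫ y in E, kerH d σ x y

/-- `γ^σ = d ω_d / σ`. -/
def gamFull (d : ℕ) (σ : ℝ) : ℝ := d * omegaD d / σ

/-!
In polar coordinates, `∫_{|z| ≥ 1} |z|^{-(d+σ)} dz = dω_d/σ` for `σ > 0` and
`∫_{|z| < 1} |z|^{-(d+σ)} dz = -dω_d/σ` for `σ < 0`. For `σ > 0`, split the region `Eᶜ` of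
`H^σ(E)` along `B_1(x)`, and split `B_1(x)ᶜ` along `E`: the far interaction of `E` with `Eᶜ`
cancels against `(dω_d/σ)|E|`, leaving `H^σ_1(E) - ∫_E ∫_{E∖B_1(x)}`. For `σ < 0`, split `E`
in `J^σ(E)` and `B_1(x)` along `E` in the same way; the near self-interaction of `E` cancels
instead. Only `H^σ(E)` and `H^σ_1(E)` can be infinite, so the cancellations are made between
the finite pieces.
-/

open Set Module

section Radial

variable {σ : ℝ}

lemma lintegral_Ici_one_rpow_neg_one_sub (hσ : 0 < σ) :
    ∫⁻ r in Ici (1 : ℝ), ENNReal.ofReal (r ^ (-1 - σ)) = ENNReal.ofReal (1 / σ) := by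
  have hint : IntegrableOn (fun r : ℝ ↦ r ^ (-1 - σ)) (Ici 1) :=
    (integrableOn_Ici_iff_integrableOn_Ioi (by simp)).mpr
      (integrableOn_Ioi_rpow_of_lt (by linarith) one_pos)
  rw [← ofReal_integral_eq_lintegral_ofReal hint, integral_Ici_eq_integral_Ioi,
    integral_Ioi_rpow_of_lt (by linarith) one_pos, Real.one_rpow]
  · ring_nf
  · filter_upwards [ae_restrict_mem measurableSet_Ici] with r (hr : 1 ≤ r)
    positivity

lemma lintegral_Ioo_zero_one_rpow_neg_one_sub (hσ : σ < 0) :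
    ∫⁻ r in Ioo (0 : ℝ) 1, ENNReal.ofReal (r ^ (-1 - σ)) = ENNReal.ofReal (1 / -σ) := by
  have hint : IntegrableOn (fun r : ℝ ↦ r ^ (-1 - σ)) (Ioo 0 1) :=
    (intervalIntegral.integrableOn_Ioo_rpow_iff one_pos).2 (by linarith)
  rw [← ofReal_integral_eq_lintegral_ofReal hint, setIntegral_congr_set Ioo_ae_eq_Ioc,
    ← intervalIntegral.integral_of_le zero_le_one, integral_rpow (Or.inl (by linarith)),
    Real.one_rpow, Real.zero_rpow (by linarith)]
  · ring_nf
  · filter_upwards [ae_restrict_mem measurableSet_Ioo] with r hr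
    exact Real.rpow_nonneg hr.1.le _

end Radial

section Polar

variable {E : Type*} [NormedAddCommGroup E] [NormedSpace ℝ E] [MeasurableSpace E] [BorelSpace E]
  [Nontrivial E] [FiniteDimensional ℝ E] (μ : Measure E) [μ.IsAddHaarMeasure]

lemma lintegral_fun_norm_addHaar (f : ℝ → ℝ≥0∞) (hf : Measurable f) :
    ∫⁻ x, f ‖x‖ ∂μ = finrank ℝ E * μ (ball 0 1) *
      ∫⁻ r in Ioi (0 : ℝ), ENNReal.ofReal (r ^ (finrank ℝ E - 1)) * f r := by
  calc ∫⁻ x, f ‖x‖ ∂μ = ∫⁻ x : ({0}ᶜ : Set E), f ‖x.1‖ ∂(μ.comap (↑)) := by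
        rw [lintegral_subtype_comap (measurableSet_singleton _).compl (fun x ↦ f ‖x‖),
          restrict_compl_singleton]
    _ = ∫⁻ p, f p.2 ∂(μ.toSphere.prod (.volumeIoiPow (finrank ℝ E - 1))) := by
        rw [← μ.measurePreserving_homeomorphUnitSphereProd.lintegral_comp (by fun_prop)]
        simp
    _ = _ := by
        rw [lintegral_prod _ (by fun_prop)]
        simp only [lintegral_const]
        rw [Measure.toSphere_apply_univ,
          Measure.volumeIoiPow, lintegral_withDensity_eq_lintegral_mul _ (by fun_prop)
            (by fun_prop)]
        simp only [Pi.mul_apply]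
        rw [lintegral_subtype_comap measurableSet_Ioi
            (fun r ↦ ENNReal.ofReal (r ^ (finrank ℝ E - 1)) * f r)]
        ring

lemma setLIntegral_norm_preimage_rpow {s : Set ℝ} (hs : MeasurableSet s) (σ : ℝ) :
    ∫⁻ x in norm ⁻¹' s, ENNReal.ofReal (‖x‖ ^ (-((finrank ℝ E : ℝ) + σ))) ∂μ
      = finrank ℝ E * μ (ball 0 1) * ∫⁻ r in s ∩ Ioi 0, ENNReal.ofReal (r ^ (-1 - σ)) := by
  have hradial : ∀ r ∈ Ioi (0 : ℝ), ENNReal.ofReal (r ^ (finrank ℝ E - 1)) *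
      s.indicator (fun r ↦ ENNReal.ofReal (r ^ (-((finrank ℝ E : ℝ) + σ)))) r
        = s.indicator (fun r ↦ ENNReal.ofReal (r ^ (-1 - σ))) r := by
    intro r (hr : 0 < r)
    by_cases hrs : r ∈ s
    · rw [indicator_of_mem hrs, indicator_of_mem hrs, ← ENNReal.ofReal_mul (by positivity),
        ← Real.rpow_natCast, ← Real.rpow_add hr, Nat.cast_sub finrank_pos]
      ring_nf
    · simp [hrs]
  calc ∫⁻ x in norm ⁻¹' s, ENNReal.ofReal (‖x‖ ^ (-((finrank ℝ E : ℝ) + σ))) ∂μ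
      = ∫⁻ x, s.indicator (fun r ↦ ENNReal.ofReal (r ^ (-((finrank ℝ E : ℝ) + σ)))) ‖x‖ ∂μ :=
        (lintegral_indicator (measurable_norm hs) _).symm
    _ = _ := by
        rw [lintegral_fun_norm_addHaar μ _ ((by fun_prop : Measurable fun r : ℝ ↦
            ENNReal.ofReal (r ^ (-((finrank ℝ E : ℝ) + σ)))).indicator hs),
          setLIntegral_congr_fun measurableSet_Ioi hradial, lintegral_indicator hs,
          Measure.restrict_restrict hs]

lemma lintegral_compl_ball_norm_rpow {σ : ℝ} (hσ : 0 < σ) :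
    ∫⁻ x in (ball (0 : E) 1)ᶜ, ENNReal.ofReal (‖x‖ ^ (-((finrank ℝ E : ℝ) + σ))) ∂μ
      = finrank ℝ E * μ (ball 0 1) * ENNReal.ofReal (1 / σ) := by
  have hball : (ball (0 : E) 1)ᶜ = norm ⁻¹' Ici 1 := by ext; simp
  rw [hball, setLIntegral_norm_preimage_rpow μ measurableSet_Ici,
    inter_eq_left.2 (Ici_subset_Ioi.2 one_pos), lintegral_Ici_one_rpow_neg_one_sub hσ]

lemma lintegral_ball_norm_rpow {σ : ℝ} (hσ : σ < 0) :
    ∫⁻ x in ball (0 : E) 1, ENNReal.ofReal (‖x‖ ^ (-((finrank ℝ E : ℝ) + σ))) ∂μ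
      = finrank ℝ E * μ (ball 0 1) * ENNReal.ofReal (1 / -σ) := by
  have hball : ball (0 : E) 1 = norm ⁻¹' Iio 1 := by ext; simp
  conv_lhs => rw [hball]
  rw [setLIntegral_norm_preimage_rpow μ measurableSet_Iio, Iio_inter_Ioi,
    lintegral_Ioo_zero_one_rpow_neg_one_sub hσ]

end Polar

section Fiberwise

variable {α β : Type*} [MeasurableSpace α] [MeasurableSpace β] {μ : Measure α} {ν : Measure β}
  [SFinite ν] {s t u : α → Set β}

lemma measurable_setLIntegral_fiber {f : α → β → ℝ≥0∞} (hf : Measurable (Function.uncurry f))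
    (hs : MeasurableSet {p : α × β | p.2 ∈ s p.1}) :
    Measurable fun x ↦ ∫⁻ y in s x, f x y ∂ν := by
  have hfiber : ∀ x, ∫⁻ y in s x, f x y ∂ν
      = ∫⁻ y, {p : α × β | p.2 ∈ s p.1}.indicator (Function.uncurry f) (x, y) ∂ν := fun x ↦
    (lintegral_indicator (measurable_prodMk_left hs) (f x)).symm
  simp_rw [hfiber]
  exact (hf.indicator hs).lintegral_prod_right'

lemma lintegral_setLIntegral_of_eq_union {f : α → β → ℝ≥0∞}
    (hf : Measurable (Function.uncurry f)) (hs : MeasurableSet {p : α × β | p.2 ∈ s p.1})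
    (ht : MeasurableSet {p : α × β | p.2 ∈ t p.1}) (hst : ∀ x, Disjoint (s x) (t x))
    (hu : ∀ x, u x = s x ∪ t x) :
    ∫⁻ x, ∫⁻ y in u x, f x y ∂ν ∂μ
      = ∫⁻ x, ∫⁻ y in s x, f x y ∂ν ∂μ + ∫⁻ x, ∫⁻ y in t x, f x y ∂ν ∂μ := by
  calc ∫⁻ x, ∫⁻ y in u x, f x y ∂ν ∂μ
      = ∫⁻ x, (∫⁻ y in s x, f x y ∂ν + ∫⁻ y in t x, f x y ∂ν) ∂μ :=
        lintegral_congr fun x ↦ by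
          rw [hu, lintegral_union (B := t x) (measurable_prodMk_left ht) (hst x)]
    _ = _ := lintegral_add_left (measurable_setLIntegral_fiber hf hs) _

lemma integral_setIntegral_eq_toReal_lintegral {K : α → β → ℝ}
    (hK : Measurable (Function.uncurry K)) (hK₀ : ∀ x y, 0 ≤ K x y)
    (hs : MeasurableSet {p : α × β | p.2 ∈ s p.1})
    (hfin : ∫⁻ x, ∫⁻ y in s x, ENNReal.ofReal (K x y) ∂ν ∂μ ≠ ⊤) :
    ∫ x, ∫ y in s x, K x y ∂ν ∂μ
      = (∫⁻ x, ∫⁻ y in s x, ENNReal.ofReal (K x y) ∂ν ∂μ).toReal := by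
  have hmeas := measurable_setLIntegral_fiber (ν := ν)
    (f := fun x y ↦ ENNReal.ofReal (K x y)) (ENNReal.measurable_ofReal.comp hK) hs
  have hinner : ∀ x, ∫ y in s x, K x y ∂ν
      = (∫⁻ y in s x, ENNReal.ofReal (K x y) ∂ν).toReal := fun x ↦
    integral_eq_lintegral_of_nonneg_ae (.of_forall (hK₀ x))
      (hK.comp measurable_prodMk_left).aestronglyMeasurable
  simp_rw [hinner]
  exact integral_toReal hmeas.aemeasurable (ae_lt_top hmeas hfin)

end Fiberwise

lemma EReal.coe_ennreal_add_sub_coe_toReal_add (a : ℝ≥0∞) {b c : ℝ≥0∞} (hb : b ≠ ⊤)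
    (hc : c ≠ ⊤) :
    ((a + b : ℝ≥0∞) : EReal) - ((c + b).toReal : EReal) = a + ((-c.toReal : ℝ) : EReal) := by
  lift b to NNReal using hb
  lift c to NNReal using hc
  induction a with
  | top => simp
  | coe a =>
    simp only [← ENNReal.coe_add, ENNReal.coe_toReal, EReal.coe_nnreal_eq_coe_real, NNReal.coe_add]
    rw [← EReal.coe_sub, ← EReal.coe_add]
    ring_nf

section Kernel

variable {d : ℕ} {σ : ℝ}

lemma measurable_kerH : Measurable (Function.uncurry (kerH d σ)) :=
  (measurable_fst.sub measurable_snd).norm.pow_const _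

lemma measurable_ofReal_kerH :
    Measurable (Function.uncurry fun x y : Rd d ↦ ENNReal.ofReal (kerH d σ x y)) :=
  ENNReal.measurable_ofReal.comp measurable_kerH

lemma kerH_nonneg (x y : Rd d) : 0 ≤ kerH d σ x y :=
  Real.rpow_nonneg (norm_nonneg _) _

lemma kerH_le_one {x y : Rd d} (hσ : -(d : ℝ) ≤ σ) (hxy : 1 ≤ ‖x - y‖) : kerH d σ x y ≤ 1 :=
  Real.rpow_le_one_of_one_le_of_nonpos hxy (by linarith)

lemma measurableSet_mem_ball_one : MeasurableSet {p : Rd d × Rd d | p.2 ∈ ball p.1 1} :=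
  measurableSet_lt (measurable_snd.dist measurable_fst) measurable_const

lemma omegaD_nonneg : 0 ≤ omegaD d :=
  ENNReal.toReal_nonneg

lemma gamFull_nonneg (hσ : 0 ≤ σ) : 0 ≤ gamFull d σ :=
  div_nonneg (mul_nonneg d.cast_nonneg omegaD_nonneg) hσ

lemma gamFull_nonpos (hσ : σ ≤ 0) : gamFull d σ ≤ 0 :=
  div_nonpos_of_nonneg_of_nonpos (mul_nonneg d.cast_nonneg omegaD_nonneg) hσ

lemma nontrivial_Rd (hd : 1 ≤ d) : Nontrivial (Rd d) :=
  Module.nontrivial_of_finrank_pos (R := ℝ) (by rw [finrank_euclideanSpace_fin]; omega)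

lemma lintegral_kerH_preimage_sub (x : Rd d) (s : Set (Rd d)) :
    ∫⁻ y in (x - ·) ⁻¹' s, ENNReal.ofReal (kerH d σ x y)
      = ∫⁻ z in s, ENNReal.ofReal (‖z‖ ^ (-((d : ℝ) + σ))) :=
  (Measure.measurePreserving_sub_left volume x).setLIntegral_comp_preimage_emb
    (Homeomorph.subLeft x).measurableEmbedding (fun z ↦ ENNReal.ofReal (‖z‖ ^ (-((d : ℝ) + σ)))) s

lemma ofReal_natCast_mul_omegaD_div (τ : ℝ) :
    ENNReal.ofReal (d * omegaD d / τ)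
      = d * volume (ball (0 : Rd d) 1) * ENNReal.ofReal (1 / τ) := by
  rw [div_eq_mul_one_div, ENNReal.ofReal_mul (mul_nonneg d.cast_nonneg omegaD_nonneg),
    ENNReal.ofReal_mul d.cast_nonneg,
    ENNReal.ofReal_natCast, omegaD, ENNReal.ofReal_toReal measure_ball_lt_top.ne]

lemma lintegral_kerH_compl_ball (hd : 1 ≤ d) (hσ : 0 < σ) (x : Rd d) :
    ∫⁻ y in (ball x 1)ᶜ, ENNReal.ofReal (kerH d σ x y) = ENNReal.ofReal (gamFull d σ) := by
  have := nontrivial_Rd hd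
  have hpolar := lintegral_compl_ball_norm_rpow (volume : Measure (Rd d)) hσ
  rw [finrank_euclideanSpace_fin] at hpolar
  have hball : (ball x 1)ᶜ = (x - ·) ⁻¹' (ball 0 1)ᶜ := by
    ext y; simp [dist_eq_norm, norm_sub_rev]
  rw [hball, lintegral_kerH_preimage_sub, hpolar, gamFull, ofReal_natCast_mul_omegaD_div σ]

lemma lintegral_kerH_ball (hd : 1 ≤ d) (hσ : σ < 0) (x : Rd d) :
    ∫⁻ y in ball x 1, ENNReal.ofReal (kerH d σ x y) = ENNReal.ofReal (-gamFull d σ) := by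
  have := nontrivial_Rd hd
  have hpolar := lintegral_ball_norm_rpow (volume : Measure (Rd d)) hσ
  rw [finrank_euclideanSpace_fin] at hpolar
  have hball : ball x 1 = (x - ·) ⁻¹' ball 0 1 := by
    ext y; simp [dist_eq_norm, norm_sub_rev]
  rw [hball, lintegral_kerH_preimage_sub, hpolar, gamFull, ← div_neg,
    ofReal_natCast_mul_omegaD_div (-σ)]

lemma lintegral_kerH_diff_ball_le (hσ : -(d : ℝ) ≤ σ) (x : Rd d) (s : Set (Rd d)) :
    ∫⁻ y in s \ ball x 1, ENNReal.ofReal (kerH d σ x y) ≤ volume s :=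
  calc ∫⁻ y in s \ ball x 1, ENNReal.ofReal (kerH d σ x y)
      ≤ ∫⁻ _ in s \ ball x 1, 1 := setLIntegral_mono measurable_const fun y hy ↦ by
        rw [← ENNReal.ofReal_one]
        refine ENNReal.ofReal_le_ofReal (kerH_le_one hσ ?_)
        simpa [dist_eq_norm, norm_sub_rev] using hy.2
    _ ≤ volume s := by
      rw [setLIntegral_one]
      exact measure_mono sdiff_subset

end Kernel

section Energy

variable {d : ℕ} {σ : ℝ} {E : Set (Rd d)}

lemma HfunFull_eq_Hfun_add (hE : MeasurableSet E) :
    HfunFull d σ E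
      = Hfun d σ 1 E + ∫⁻ x in E, ∫⁻ y in Eᶜ \ ball x 1, ENNReal.ofReal (kerH d σ x y) :=
  lintegral_setLIntegral_of_eq_union measurable_ofReal_kerH
    (measurableSet_mem_ball_one.diff (measurable_snd hE))
    ((measurable_snd hE.compl).diff measurableSet_mem_ball_one)
    (fun _ ↦ disjoint_left.2 fun _ hy hy' ↦ hy'.2 hy.1)
    (fun x ↦ by ext; simp only [mem_compl_iff, mem_union, Set.mem_sdiff]; tauto)

lemma lintegral_diff_ball_add_lintegral_compl_diff_ball (hd : 1 ≤ d) (hσ : 0 < σ)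
    (hE : MeasurableSet E) :
    (∫⁻ x in E, ∫⁻ y in E \ ball x 1, ENNReal.ofReal (kerH d σ x y))
      + ∫⁻ x in E, ∫⁻ y in Eᶜ \ ball x 1, ENNReal.ofReal (kerH d σ x y)
      = ENNReal.ofReal (gamFull d σ) * volume E := by
  rw [← lintegral_setLIntegral_of_eq_union (u := fun x ↦ (ball x 1)ᶜ)
    (s := fun x ↦ E \ ball x 1) (t := fun x ↦ Eᶜ \ ball x 1) measurable_ofReal_kerH
    ((measurable_snd hE).diff measurableSet_mem_ball_one)
    ((measurable_snd hE.compl).diff measurableSet_mem_ball_one)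
    (fun _ ↦ disjoint_left.2 fun _ hy hy' ↦ hy'.1 hy.1)
    (fun x ↦ by ext; simp only [mem_compl_iff, mem_union, Set.mem_sdiff]; tauto)]
  simp only [lintegral_kerH_compl_ball hd hσ, setLIntegral_const]

lemma lintegral_inter_ball_add_Hfun (hd : 1 ≤ d) (hσ : σ < 0) (hE : MeasurableSet E) :
    (∫⁻ x in E, ∫⁻ y in E ∩ ball x 1, ENNReal.ofReal (kerH d σ x y)) + Hfun d σ 1 E
      = ENNReal.ofReal (-gamFull d σ) * volume E := by
  rw [Hfun, ← lintegral_setLIntegral_of_eq_union (u := fun x ↦ ball x 1)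
    (s := fun x ↦ E ∩ ball x 1) (t := fun x ↦ ball x 1 \ E) measurable_ofReal_kerH
    ((measurable_snd hE).inter measurableSet_mem_ball_one)
    (measurableSet_mem_ball_one.diff (measurable_snd hE))
    (fun _ ↦ disjoint_left.2 fun _ hy hy' ↦ hy'.2 hy.1)
    (fun x ↦ by rw [inter_comm, inter_union_sdiff])]
  simp only [lintegral_kerH_ball hd hσ, setLIntegral_const]

lemma lintegral_lintegral_kerH_eq_add (hE : MeasurableSet E) :
    ∫⁻ x in E, ∫⁻ y in E, ENNReal.ofReal (kerH d σ x y)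
      = (∫⁻ x in E, ∫⁻ y in E ∩ ball x 1, ENNReal.ofReal (kerH d σ x y))
        + ∫⁻ x in E, ∫⁻ y in E \ ball x 1, ENNReal.ofReal (kerH d σ x y) :=
  lintegral_setLIntegral_of_eq_union (u := fun _ ↦ E) (s := fun x ↦ E ∩ ball x 1)
    (t := fun x ↦ E \ ball x 1) measurable_ofReal_kerH
    ((measurable_snd hE).inter measurableSet_mem_ball_one)
    ((measurable_snd hE).diff measurableSet_mem_ball_one)
    (fun _ ↦ disjoint_left.2 fun _ hy hy' ↦ hy'.2 hy.2)
    (fun x ↦ (inter_union_sdiff E (ball x 1)).symm)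

lemma Jfun_eq_neg_toReal (hE : MeasurableSet E)
    (hfin : ∫⁻ x in E, ∫⁻ y in E \ ball x 1, ENNReal.ofReal (kerH d σ x y) ≠ ⊤) :
    Jfun d σ 1 E = -(∫⁻ x in E, ∫⁻ y in E \ ball x 1, ENNReal.ofReal (kerH d σ x y)).toReal := by
  rw [Jfun, integral_setIntegral_eq_toReal_lintegral (s := fun x ↦ E \ ball x 1)
    measurable_kerH kerH_nonneg ((measurable_snd hE).diff measurableSet_mem_ball_one) hfin]

lemma JfunFull_eq_neg_toReal (hE : MeasurableSet E)
    (hfin : ∫⁻ x in E, ∫⁻ y in E, ENNReal.ofReal (kerH d σ x y) ≠ ⊤) :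
    JfunFull d σ E = -(∫⁻ x in E, ∫⁻ y in E, ENNReal.ofReal (kerH d σ x y)).toReal := by
  rw [JfunFull, integral_setIntegral_eq_toReal_lintegral (s := fun _ ↦ E) measurable_kerH
    kerH_nonneg (measurable_snd hE) hfin]

lemma HfunFull_sub_eq_Hfun_add_Jfun (hd : 1 ≤ d) (hσ : 0 < σ) (hE : MeasurableSet E)
    (hEfin : volume E < ⊤) :
    (HfunFull d σ E : EReal) - ((gamFull d σ * (volume E).toReal : ℝ) : EReal)
      = (Hfun d σ 1 E : EReal) + ((Jfun d σ 1 E : ℝ) : EReal) := by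
  set S := ∫⁻ x in E, ∫⁻ y in E \ ball x 1, ENNReal.ofReal (kerH d σ x y)
  set T := ∫⁻ x in E, ∫⁻ y in Eᶜ \ ball x 1, ENNReal.ofReal (kerH d σ x y)
  have hST := lintegral_diff_ball_add_lintegral_compl_diff_ball hd hσ hE
  obtain ⟨hS, hT⟩ : S ≠ ⊤ ∧ T ≠ ⊤ :=
    ENNReal.add_ne_top.1 (hST ▸ ENNReal.mul_ne_top ENNReal.ofReal_ne_top hEfin.ne)
  have hγ : gamFull d σ * (volume E).toReal = (S + T).toReal := by
    rw [hST, ENNReal.toReal_mul, ENNReal.toReal_ofReal (gamFull_nonneg hσ.le)]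
  rw [HfunFull_eq_Hfun_add hE, hγ, EReal.coe_ennreal_add_sub_coe_toReal_add _ hT hS,
    Jfun_eq_neg_toReal hE hS]

lemma JfunFull_sub_eq_Hfun_add_Jfun (hd : 1 ≤ d) (hσd : -(d : ℝ) < σ) (hσ : σ < 0)
    (hE : MeasurableSet E) (hEfin : volume E < ⊤) :
    ((JfunFull d σ E - gamFull d σ * (volume E).toReal : ℝ) : EReal)
      = (Hfun d σ 1 E : EReal) + ((Jfun d σ 1 E : ℝ) : EReal) := by
  set Q := ∫⁻ x in E, ∫⁻ y in E ∩ ball x 1, ENNReal.ofReal (kerH d σ x y)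
  set S := ∫⁻ x in E, ∫⁻ y in E \ ball x 1, ENNReal.ofReal (kerH d σ x y)
  have hQH := lintegral_inter_ball_add_Hfun hd hσ hE
  obtain ⟨hQ, hH⟩ : Q ≠ ⊤ ∧ Hfun d σ 1 E ≠ ⊤ :=
    ENNReal.add_ne_top.1 (hQH ▸ ENNReal.mul_ne_top ENNReal.ofReal_ne_top hEfin.ne)
  have hS : S ≠ ⊤ := by
    refine ne_top_of_le_ne_top (ENNReal.mul_ne_top hEfin.ne hEfin.ne) ?_
    calc S ≤ ∫⁻ _ in E, volume E :=
          setLIntegral_mono measurable_const fun x _ ↦ lintegral_kerH_diff_ball_le hσd.le x E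
      _ = volume E * volume E := setLIntegral_const _ _
  have hγ : -(gamFull d σ * (volume E).toReal) = Q.toReal + (Hfun d σ 1 E).toReal := by
    rw [← ENNReal.toReal_add hQ hH, hQH, ENNReal.toReal_mul,
      ENNReal.toReal_ofReal (neg_nonneg.2 (gamFull_nonpos hσ.le)), neg_mul]
  have hP := lintegral_lintegral_kerH_eq_add (σ := σ) hE
  rw [JfunFull_eq_neg_toReal hE (hP ▸ ENNReal.add_ne_top.2 ⟨hQ, hS⟩), hP,
    ENNReal.toReal_add hQ hS, Jfun_eq_neg_toReal hE hS, ← EReal.coe_ennreal_toReal hH]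
  norm_cast
  linarith

end Energy

theorem renormalized_energy_eq_H1_add_J1
    (d : ℕ) (hd : 1 ≤ d) (σ : ℝ)
    (E : Set (Rd d)) (hE : MeasurableSet E) (hEfin : volume E < ⊤) :
    (0 < σ → σ < 1 →
      (HfunFull d σ E : EReal) - ((gamFull d σ * (volume E).toReal : ℝ) : EReal)
        = (Hfun d σ 1 E : EReal) + ((Jfun d σ 1 E : ℝ) : EReal)) ∧
    (-(d : ℝ) < σ → σ < 0 →
      ((JfunFull d σ E - gamFull d σ * (volume E).toReal : ℝ) : EReal)
        = (Hfun d σ 1 E : EReal) + ((Jfun d σ 1 E : ℝ) : EReal)) :=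
  ⟨fun hσ _ ↦ HfunFull_sub_eq_Hfun_add_Jfun hd hσ hE hEfin,
    fun hσd hσ ↦ JfunFull_sub_eq_Hfun_add_Jfun hd hσd hσ hE hEfin⟩
end
end

section
/- Let d ≥ 1, σ ∈ (−d,1) and R > 0. The functional H^σ_R is submodular: for all measurable sets E₁, E₂ ⊆ ℝ^d of finite Lebesgue measure, H^σ_R(E₁ ∪ E₂) + H^σ_R(E₁ ∩ E₂) ≤ H^σ_R(E₁) + H^σ_R(E₂) as elements of [0,+∞]. Consequently, Ĥ^σ_R(E₁ ∪ E₂) + Ĥ^σ_R(E₁ ∩ E₂) ≤ Ĥ^σ_R(E₁) + Ĥ^σ_R(E₂). -/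
open MeasureTheory Metric Filter Topology ENNReal
open scoped symmDiff

noncomputable section

/-- The renormalization constant `γ^σ_ρ`. -/
def gam (d : ℕ) (σ ρ : ℝ) : ℝ :=
  if σ = 0 then d * omegaD d * Real.log ρ else d * omegaD d * (1 - ρ ^ (-σ)) / σ

/-- `Ĥ^σ_ρ(E) = H^σ_ρ(E) - γ^σ_ρ |E|`, valued in `(-∞,+∞]` (as an `EReal`). -/
def Hhat (d : ℕ) (σ ρ : ℝ) (E : Set (Rd d)) : EReal :=
  (Hfun d σ ρ E : EReal) - ((gam d σ ρ * (volume E).toReal : ℝ) : EReal)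

namespace HSubAux

variable {d : ℕ} {σ R : ℝ}

/-- The kernel as a function on the product space. -/
def kk (d : ℕ) (σ : ℝ) (p : Rd d × Rd d) : ℝ≥0∞ := ENNReal.ofReal (kerH d σ p.1 p.2)

lemma measurable_kk : Measurable (kk d σ) := by
  apply Measurable.ennreal_ofReal
  unfold kerH
  exact ((measurable_fst.sub measurable_snd).norm).pow measurable_const

/-- The region of integration for `Hfun`. -/
def SS (d : ℕ) (R : ℝ) (E : Set (Rd d)) : Set (Rd d × Rd d) :=
  {p | p.1 ∈ E ∧ p.2 ∈ ball p.1 R ∧ p.2 ∉ E}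

lemma measurableSet_SS {E : Set (Rd d)} (hE : MeasurableSet E) :
    MeasurableSet (SS d R E) := by
  have h1 : MeasurableSet {p : Rd d × Rd d | p.1 ∈ E} := measurable_fst hE
  have h2 : MeasurableSet {p : Rd d × Rd d | p.2 ∈ ball p.1 R} := by
    have : IsOpen {p : Rd d × Rd d | dist p.2 p.1 < R} :=
      isOpen_lt (continuous_dist.comp (continuous_snd.prodMk continuous_fst)) continuous_const
    exact this.measurableSet
  have h3 : MeasurableSet {p : Rd d × Rd d | p.2 ∈ E} := measurable_snd hE
  exact h1.inter (h2.inter h3.compl)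

lemma FF_measurable {E : Set (Rd d)} (hE : MeasurableSet E) :
    Measurable ((SS d R E).indicator (kk d σ)) :=
  measurable_kk.indicator (measurableSet_SS hE)

lemma Hfun_eq {E : Set (Rd d)} (hE : MeasurableSet E) :
    Hfun d σ R E = ∫⁻ x, ∫⁻ y, (SS d R E).indicator (kk d σ) (x, y) := by
  rw [Hfun, ← lintegral_indicator hE]
  refine lintegral_congr fun x => ?_
  by_cases hx : x ∈ E
  · rw [Set.indicator_of_mem hx, ← lintegral_indicator ((measurableSet_ball).diff hE)]
    refine lintegral_congr fun y => ?_
    by_cases hy : y ∈ ball x R \ E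
    · rw [Set.indicator_of_mem hy, Set.indicator_of_mem (by exact ⟨hx, hy.1, hy.2⟩)]
      rfl
    · rw [Set.indicator_of_notMem hy, Set.indicator_of_notMem]
      intro h
      exact hy ⟨h.2.1, h.2.2⟩
  · rw [Set.indicator_of_notMem hx]
    have h0 : ∀ y, (SS d R E).indicator (kk d σ) (x, y) = 0 := fun y =>
      Set.indicator_of_notMem (fun h => hx h.1) _
    simp [h0]

lemma pointwise_ineq {E₁ E₂ : Set (Rd d)} (p : Rd d × Rd d) :
    (SS d R (E₁ ∪ E₂)).indicator (kk d σ) p + (SS d R (E₁ ∩ E₂)).indicator (kk d σ) p ≤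
      (SS d R E₁).indicator (kk d σ) p + (SS d R E₂).indicator (kk d σ) p := by
  simp only [Set.indicator_apply, SS, Set.mem_setOf_eq, Set.mem_union, Set.mem_inter_iff]
  by_cases hA : p.1 ∈ E₁ <;> by_cases hB : p.1 ∈ E₂ <;> by_cases hC : p.2 ∈ E₁ <;>
    by_cases hD : p.2 ∈ E₂ <;> by_cases hP : p.2 ∈ ball p.1 R <;>
    simp_all

end HSubAux

open HSubAux in
theorem H_submodular
    (d : ℕ) (hd : 1 ≤ d) (σ : ℝ) (hσ1 : -(d : ℝ) < σ) (hσ2 : σ < 1)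
    (R : ℝ) (hR : 0 < R)
    (E₁ E₂ : Set (Rd d)) (hE₁ : MeasurableSet E₁) (hE₂ : MeasurableSet E₂)
    (hE₁fin : volume E₁ < ⊤) (hE₂fin : volume E₂ < ⊤) :
    Hfun d σ R (E₁ ∪ E₂) + Hfun d σ R (E₁ ∩ E₂) ≤ Hfun d σ R E₁ + Hfun d σ R E₂ ∧
    Hhat d σ R (E₁ ∪ E₂) + Hhat d σ R (E₁ ∩ E₂) ≤ Hhat d σ R E₁ + Hhat d σ R E₂ := by
  have hU : MeasurableSet (E₁ ∪ E₂) := hE₁.union hE₂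
  have hI : MeasurableSet (E₁ ∩ E₂) := hE₁.inter hE₂
  have m : ∀ {E : Set (Rd d)}, MeasurableSet E →
      Measurable fun x => ∫⁻ y, (SS d R E).indicator (kk d σ) (x, y) := fun hE =>
    (FF_measurable hE).lintegral_prod_right'
  have key : Hfun d σ R (E₁ ∪ E₂) + Hfun d σ R (E₁ ∩ E₂) ≤ Hfun d σ R E₁ + Hfun d σ R E₂ := by
    rw [Hfun_eq hU, Hfun_eq hI, Hfun_eq hE₁, Hfun_eq hE₂,
      ← lintegral_add_left (m hU), ← lintegral_add_left (m hE₁)]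
    refine lintegral_mono fun x => ?_
    have h1 : Measurable fun y => (SS d R (E₁ ∪ E₂)).indicator (kk d σ) (x, y) :=
      (FF_measurable hU).comp measurable_prodMk_left
    have h2 : Measurable fun y => (SS d R E₁).indicator (kk d σ) (x, y) :=
      (FF_measurable hE₁).comp measurable_prodMk_left
    rw [← lintegral_add_left h1, ← lintegral_add_left h2]
    exact lintegral_mono fun y => pointwise_ineq _
  refine ⟨key, ?_⟩
  -- measure identities
  have hUfin : volume (E₁ ∪ E₂) < ⊤ :=
    lt_of_le_of_lt (measure_union_le E₁ E₂) (ENNReal.add_lt_top.2 ⟨hE₁fin, hE₂fin⟩)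
  have hIfin : volume (E₁ ∩ E₂) < ⊤ :=
    lt_of_le_of_lt (measure_mono Set.inter_subset_left) hE₁fin
  have hmeas : volume (E₁ ∪ E₂) + volume (E₁ ∩ E₂) = volume E₁ + volume E₂ :=
    measure_union_add_inter E₁ hE₂
  have hreal : (volume (E₁ ∪ E₂)).toReal + (volume (E₁ ∩ E₂)).toReal =
      (volume E₁).toReal + (volume E₂).toReal := by
    rw [← ENNReal.toReal_add hUfin.ne hIfin.ne, ← ENNReal.toReal_add hE₁fin.ne hE₂fin.ne, hmeas]
  set g := gam d σ R with hg
  have hgam : g * (volume (E₁ ∪ E₂)).toReal + g * (volume (E₁ ∩ E₂)).toReal =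
      g * (volume E₁).toReal + g * (volume E₂).toReal := by
    rw [← mul_add, ← mul_add, hreal]
  -- EReal manipulation
  simp only [Hhat, sub_eq_add_neg]
  rw [add_add_add_comm, add_add_add_comm ((Hfun d σ R E₁ : EReal))]
  refine add_le_add ?_ ?_
  · rw [← EReal.coe_ennreal_add, ← EReal.coe_ennreal_add]
    exact EReal.coe_ennreal_le_coe_ennreal_iff.2 key
  · rw [← EReal.coe_neg, ← EReal.coe_neg, ← EReal.coe_neg, ← EReal.coe_neg,
      ← EReal.coe_add, ← EReal.coe_add, EReal.coe_le_coe_iff]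
    rw [← neg_add, ← neg_add, hgam]
end
end

section
/- Let d ≥ 1, σ̄ ∈ (−d,1) and r̄ > 0. Let {σ_n} ⊂ (−d,1) with σ_n → σ̄ and {r_n} ⊂ (0,+∞) with r_n → r̄. Let E ⊆ ℝ^d and E_n ⊆ ℝ^d be measurable sets of finite Lebesgue measure with χ_{E_n} → χ_E strongly in L¹(ℝ^d). Then: (i) for every x ∈ ℝ^d, j^{σ_n}_{r_n}(x,E_n) → j^{σ̄}_{r̄}(x,E) as n → ∞; (ii) Ĵ^{σ_n}_{r_n}(E_n) → Ĵ^{σ̄}_{r̄}(E) as n → ∞. -/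
open MeasureTheory Metric Filter Topology ENNReal
open scoped symmDiff

noncomputable section

/-- `Ĵ^σ_r(E) = J^σ_r(E) - γ^σ_r |E|`. -/
def Jhat (d : ℕ) (σ r : ℝ) (E : Set (Rd d)) : ℝ :=
  Jfun d σ r E - gam d σ r * (volume E).toReal

/-- `j^σ_r(x,E) = -∫_{E∖B_r(x)} |x-y|^{-(d+σ)} dy - γ^σ_r`. -/
def jfun (d : ℕ) (σ r : ℝ) (x : Rd d) (E : Set (Rd d)) : ℝ :=
  -(∫ y in E \ ball x r, kerH d σ x y) - gam d σ r

/-!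
Off a ball `B_ρ(x)` with `ρ ≥ ρ₀ > 0` the kernel `|x - y|^{-(d+σ)}` is bounded by a constant
depending only on `d` and `ρ₀`, uniformly in `σ ∈ [-d, 1]`. Hence `j^σ_ρ(x, ·)` is Lipschitz with
respect to `|A ∆ B|`, which takes care of `E_n → E`, and for fixed `E` dominated convergence gives
continuity in `(σ, ρ)`: the truncated kernels converge off the null sphere `∂B_{r̄}(x)`, and
`γ^σ_ρ = d ω_d log ρ · (1 - e^{-σ log ρ}) / (σ log ρ)` is jointly continuous. Finally
`Ĵ^σ_ρ(E) = ∫_E j^σ_ρ(x, E) dx`, and the uniform bound on `j` lets one pass to the limit in the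
integrand and in the domain of integration at once.
-/

theorem Real.rpow_le_max_one_rpow {a t p q : ℝ} (ha : 0 < a) (hat : a ≤ t) (hp : p ≤ 0)
    (hqp : -q ≤ p) : t ^ p ≤ max 1 (a ^ (-q)) := by
  rcases le_or_gt 1 t with ht | ht
  · exact (Real.rpow_le_one_of_one_le_of_nonpos ht hp).trans (le_max_left _ _)
  · calc t ^ p ≤ a ^ p := Real.rpow_le_rpow_of_nonpos ha hat hp
      _ ≤ a ^ (-q) := Real.rpow_le_rpow_of_exponent_ge ha (hat.trans ht.le) hqp
      _ ≤ max 1 (a ^ (-q)) := le_max_right _ _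

section SetIntegral

variable {α G : Type*} [MeasurableSpace α] [NormedAddCommGroup G] [NormedSpace ℝ G]
  {μ : Measure α}

theorem norm_setIntegral_sub_setIntegral_le {f : α → G} {M : ℝ} {s t : Set α}
    (hfm : AEStronglyMeasurable f μ) (hM : ∀ x, ‖f x‖ ≤ M) (hs : MeasurableSet s)
    (ht : MeasurableSet t) (hsfin : μ s < ⊤) (htfin : μ t < ⊤) :
    ‖∫ x in s, f x ∂μ - ∫ x in t, f x ∂μ‖ ≤ M * μ.real (s ∆ t) := by
  have hint : ∀ u, μ u < ⊤ → IntegrableOn f u μ := fun u hu =>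
    Measure.integrableOn_of_bounded hu.ne hfm (ae_of_all _ hM)
  rw [← integral_inter_add_sdiff ht (hint s hsfin), ← integral_inter_add_sdiff hs (hint t htfin),
    Set.inter_comm, add_sub_add_left_eq_sub, measureReal_symmDiff_eq hs ht hsfin.ne htfin.ne,
    mul_add]
  calc ‖∫ x in s \ t, f x ∂μ - ∫ x in t \ s, f x ∂μ‖
      ≤ ‖∫ x in s \ t, f x ∂μ‖ + ‖∫ x in t \ s, f x ∂μ‖ := norm_sub_le _ _
    _ ≤ M * μ.real (s \ t) + M * μ.real (t \ s) := by
      gcongr <;> exact norm_setIntegral_le_of_norm_le_const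
        (measure_lt_top_of_subset Set.sdiff_subset (by finiteness)) fun x _ => hM x

theorem tendsto_setIntegral_of_tendsto_measureReal_symmDiff {ι : Type*} {l : Filter ι}
    [l.IsCountablyGenerated] {F : ι → α → G} {f : α → G} {A : ι → Set α} {s : Set α} {M : ℝ}
    (hFm : ∀ i, AEStronglyMeasurable (F i) μ) (hFM : ∀ᶠ i in l, ∀ x, ‖F i x‖ ≤ M)
    (hFf : ∀ x ∈ s, Tendsto (fun i => F i x) l (𝓝 (f x)))
    (hA : ∀ i, MeasurableSet (A i)) (hs : MeasurableSet s) (hAfin : ∀ i, μ (A i) < ⊤)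
    (hsfin : μ s < ⊤) (hAs : Tendsto (fun i => μ.real (A i ∆ s)) l (𝓝 0)) :
    Tendsto (fun i => ∫ x in A i, F i x ∂μ) l (𝓝 (∫ x in s, f x ∂μ)) := by
  have hdomain : Tendsto (fun i => ∫ x in A i, F i x ∂μ - ∫ x in s, F i x ∂μ) l (𝓝 0) := by
    refine squeeze_zero_norm' ?_ (by simpa using hAs.const_mul M)
    filter_upwards [hFM] with i hi
    exact norm_setIntegral_sub_setIntegral_le (hFm i) hi (hA i) hs (hAfin i) hsfin
  have hintegrand : Tendsto (fun i => ∫ x in s, F i x ∂μ) l (𝓝 (∫ x in s, f x ∂μ)) :=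
    tendsto_integral_filter_of_dominated_convergence (fun _ => M)
      (Eventually.of_forall fun i => (hFm i).restrict) (hFM.mono fun i hi => ae_of_all _ hi)
      (integrableOn_const hsfin.ne) ((ae_restrict_iff' hs).mpr (ae_of_all _ hFf))
  simpa using hdomain.add hintegrand

end SetIntegral

theorem gam_eq_dslope_exp (d : ℕ) (σ : ℝ) {ρ : ℝ} (hρ : 0 < ρ) :
    gam d σ ρ = d * omegaD d * (dslope Real.exp 0 (-(σ * Real.log ρ)) * Real.log ρ) := by
  rcases eq_or_ne σ 0 with rfl | hσ
  · simp [gam, dslope_same]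
  rcases eq_or_ne (Real.log ρ) 0 with hlog | hlog
  · simp [gam, Real.eq_one_of_pos_of_log_eq_zero hρ hlog]
  rw [gam, if_neg hσ, dslope_of_ne _ (neg_ne_zero.mpr (mul_ne_zero hσ hlog)), slope_def_field,
    Real.rpow_def_of_pos hρ]
  field_simp
  rw [Real.exp_zero]
  ring_nf

theorem continuousAt_gam (d : ℕ) (σ : ℝ) {ρ : ℝ} (hρ : 0 < ρ) :
    ContinuousAt (fun p : ℝ × ℝ => gam d p.1 p.2) (σ, ρ) := by
  have hdslope : Continuous (dslope Real.exp 0) := continuousOn_univ.mp <|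
    (continuousOn_dslope univ_mem).mpr ⟨Real.continuous_exp.continuousOn, Real.differentiableAt_exp⟩
  have hlog : ContinuousAt (fun p : ℝ × ℝ => Real.log p.2) (σ, ρ) := continuousAt_snd.log hρ.ne'
  have hpos : ∀ᶠ p : ℝ × ℝ in 𝓝 (σ, ρ), 0 < p.2 := continuousAt_snd.eventually (lt_mem_nhds hρ)
  refine ContinuousAt.congr ?_ (hpos.mono fun p hp => (gam_eq_dslope_exp d p.1 hp).symm)
  exact continuousAt_const.mul
    ((hdslope.continuousAt.comp (continuousAt_fst.mul hlog).neg).mul hlog)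

def kerBound (d : ℕ) (ρ₀ : ℝ) : ℝ := max 1 (ρ₀ ^ (-((d : ℝ) + 1)))

def truncKer (d : ℕ) (σ ρ : ℝ) (x : Rd d) : Rd d → ℝ := (ball x ρ)ᶜ.indicator (kerH d σ x)

section Kernel

variable {d : ℕ} {σ ρ ρ₀ : ℝ} {x : Rd d}

theorem measurable_kerH_s15 (d : ℕ) (σ : ℝ) : Measurable (fun p : Rd d × Rd d => kerH d σ p.1 p.2) := by
  unfold kerH; fun_prop

theorem kerH_le_kerBound (hσ : σ ∈ Set.Icc (-(d : ℝ)) 1) (hρ₀ : 0 < ρ₀) {y : Rd d}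
    (hy : ρ₀ ≤ dist x y) : kerH d σ x y ≤ kerBound d ρ₀ :=
  Real.rpow_le_max_one_rpow hρ₀ (by rwa [← dist_eq_norm]) (by linarith [hσ.1]) (by linarith [hσ.2])

theorem norm_truncKer_le (hσ : σ ∈ Set.Icc (-(d : ℝ)) 1) (hρ₀ : 0 < ρ₀) (hρ : ρ₀ ≤ ρ)
    (y : Rd d) : ‖truncKer d σ ρ x y‖ ≤ kerBound d ρ₀ := by
  by_cases hy : y ∈ ball x ρ
  · simp [truncKer, hy, kerBound]
  · rw [truncKer, Set.indicator_of_mem hy, Real.norm_of_nonneg (by unfold kerH; positivity)]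
    exact kerH_le_kerBound hσ hρ₀ (hρ.trans (by simpa [dist_comm] using hy))

theorem measurable_truncKer (d : ℕ) (σ ρ : ℝ) :
    Measurable (fun p : Rd d × Rd d => truncKer d σ ρ p.1 p.2) := by
  have h : (fun p : Rd d × Rd d => truncKer d σ ρ p.1 p.2)
      = {p | ρ ≤ dist p.2 p.1}.indicator (fun p => kerH d σ p.1 p.2) := by
    ext p; simp [truncKer, Set.indicator]
  rw [h]
  exact (measurable_kerH_s15 d σ).indicator (measurableSet_le measurable_const (by fun_prop))

theorem setIntegral_truncKer (A : Set (Rd d)) :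
    ∫ y in A, truncKer d σ ρ x y = ∫ y in A \ ball x ρ, kerH d σ x y := by
  rw [truncKer, setIntegral_indicator measurableSet_ball.compl, Set.sdiff_eq]

theorem jfun_eq_truncKer (A : Set (Rd d)) :
    jfun d σ ρ x A = -(∫ y in A, truncKer d σ ρ x y) - gam d σ ρ := by
  rw [jfun, setIntegral_truncKer]

theorem measurable_jfun (d : ℕ) (σ ρ : ℝ) (A : Set (Rd d)) :
    Measurable (fun x => jfun d σ ρ x A) := by
  simp only [jfun_eq_truncKer]
  exact ((measurable_truncKer d σ ρ).stronglyMeasurable.integral_prod_right'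
    (ν := volume.restrict A)).measurable.neg.sub_const _

theorem norm_jfun_le (hσ : σ ∈ Set.Icc (-(d : ℝ)) 1) (hρ₀ : 0 < ρ₀) (hρ : ρ₀ ≤ ρ)
    {A : Set (Rd d)} (hA : volume A < ⊤) :
    ‖jfun d σ ρ x A‖ ≤ kerBound d ρ₀ * volume.real A + ‖gam d σ ρ‖ := by
  rw [jfun_eq_truncKer]
  refine (norm_sub_le _ _).trans (add_le_add_left ?_ _)
  rw [norm_neg]
  exact norm_setIntegral_le_of_norm_le_const hA fun y _ => norm_truncKer_le hσ hρ₀ hρ y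

theorem norm_jfun_sub_jfun_le (hσ : σ ∈ Set.Icc (-(d : ℝ)) 1) (hρ₀ : 0 < ρ₀) (hρ : ρ₀ ≤ ρ)
    {A B : Set (Rd d)} (hA : MeasurableSet A) (hB : MeasurableSet B) (hAfin : volume A < ⊤)
    (hBfin : volume B < ⊤) :
    ‖jfun d σ ρ x A - jfun d σ ρ x B‖ ≤ kerBound d ρ₀ * volume.real (A ∆ B) := by
  rw [jfun_eq_truncKer, jfun_eq_truncKer, sub_sub_sub_cancel_right, neg_sub_neg, norm_sub_rev]
  exact norm_setIntegral_sub_setIntegral_le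
    ((measurable_truncKer d σ ρ).comp measurable_prodMk_left).aestronglyMeasurable
    (norm_truncKer_le hσ hρ₀ hρ) hA hB hAfin hBfin

theorem Jhat_eq_setIntegral_jfun (hσ : σ ∈ Set.Icc (-(d : ℝ)) 1) (hρ : 0 < ρ) {A : Set (Rd d)}
    (hA : volume A < ⊤) : Jhat d σ ρ A = ∫ x in A, jfun d σ ρ x A := by
  have hint : IntegrableOn (fun x => ∫ y in A, truncKer d σ ρ x y) A :=
    Measure.integrableOn_of_bounded hA.ne
      ((measurable_truncKer d σ ρ).stronglyMeasurable.integral_prod_right'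
        (ν := volume.restrict A)).aestronglyMeasurable
      (ae_of_all _ fun x => norm_setIntegral_le_of_norm_le_const hA
        fun y _ => norm_truncKer_le hσ hρ le_rfl y)
  simp only [jfun_eq_truncKer, Jhat, Jfun, ← setIntegral_truncKer]
  rw [integral_sub (f := fun x => -∫ y in A, truncKer d σ ρ x y) hint.neg
    (integrableOn_const hA.ne), integral_neg, setIntegral_const, smul_eq_mul, mul_comm,
    measureReal_def]

end Kernel

section Convergence

variable {d : ℕ} {ι : Type*} {l : Filter ι} {σ r : ι → ℝ} {σb rb : ℝ}

theorem eventually_mem_ball_iff (hr : Tendsto r l (𝓝 rb)) {x y : Rd d} (hy : y ∉ sphere x rb) :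
    ∀ᶠ i in l, y ∈ ball x (r i) ↔ y ∈ ball x rb := by
  rcases lt_or_gt_of_ne (mt mem_sphere.mpr hy) with hlt | hgt
  · filter_upwards [hr.eventually_const_lt hlt] with i hi
    simp [mem_ball, hlt, hi]
  · filter_upwards [hr.eventually_lt_const hgt] with i hi
    simp only [mem_ball]
    constructor <;> intro h <;> linarith

theorem tendsto_truncKer (hσ : Tendsto σ l (𝓝 σb)) (hrb : 0 < rb) (hr : Tendsto r l (𝓝 rb))
    {x y : Rd d} (hy : y ∉ sphere x rb) :
    Tendsto (fun i => truncKer d (σ i) (r i) x y) l (𝓝 (truncKer d σb rb x y)) := by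
  refine Tendsto.congr' (f₁ := fun i => (ball x rb)ᶜ.indicator (kerH d (σ i) x) y)
    ((eventually_mem_ball_iff hr hy).mono fun i hi => by simp [truncKer, Set.indicator, hi]) ?_
  by_cases hyb : y ∈ ball x rb
  · simpa [truncKer, hyb] using tendsto_const_nhds
  have hxy : ‖x - y‖ ≠ 0 := by
    rw [← dist_eq_norm, dist_comm]; exact (hrb.trans_le (not_lt.mp hyb)).ne'
  simp only [truncKer, Set.indicator_of_mem (Set.mem_compl hyb), kerH]
  exact (Real.continuousAt_const_rpow hxy).tendsto.comp (tendsto_const_nhds.add hσ).neg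

theorem tendsto_setIntegral_truncKer [l.IsCountablyGenerated]
    (hσ : ∀ i, σ i ∈ Set.Icc (-(d : ℝ)) 1) (hσb : Tendsto σ l (𝓝 σb)) (hrb : 0 < rb)
    (hr : Tendsto r l (𝓝 rb)) {E : Set (Rd d)} (hE : volume E < ⊤) (x : Rd d) :
    Tendsto (fun i => ∫ y in E, truncKer d (σ i) (r i) x y) l
      (𝓝 (∫ y in E, truncKer d σb rb x y)) := by
  have hsphere : ∀ᵐ y, y ∉ sphere x rb :=
    measure_eq_zero_iff_ae_notMem.mp (Measure.addHaar_sphere_of_ne_zero volume x hrb.ne')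
  refine tendsto_integral_filter_of_dominated_convergence (fun _ => kerBound d (rb / 2))
    (Eventually.of_forall fun i =>
      ((measurable_truncKer d (σ i) (r i)).comp measurable_prodMk_left).aestronglyMeasurable)
    ?_ (integrableOn_const hE.ne)
    (ae_restrict_of_ae (hsphere.mono fun y hy => tendsto_truncKer hσb hrb hr hy))
  filter_upwards [hr.eventually_const_le (half_lt_self hrb)] with i hi
  exact ae_of_all _ (norm_truncKer_le (hσ i) (half_pos hrb) hi)

theorem tendsto_jfun [l.IsCountablyGenerated] (hσ : ∀ i, σ i ∈ Set.Icc (-(d : ℝ)) 1)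
    (hσb : Tendsto σ l (𝓝 σb)) (hrb : 0 < rb) (hr : Tendsto r l (𝓝 rb))
    {E : Set (Rd d)} (hE : MeasurableSet E) (hEfin : volume E < ⊤)
    {En : ι → Set (Rd d)} (hEn : ∀ i, MeasurableSet (En i)) (hEnfin : ∀ i, volume (En i) < ⊤)
    (hEnE : Tendsto (fun i => volume.real (En i ∆ E)) l (𝓝 0)) (x : Rd d) :
    Tendsto (fun i => jfun d (σ i) (r i) x (En i)) l (𝓝 (jfun d σb rb x E)) := by
  have hgam := (continuousAt_gam d σb hrb).tendsto.comp (hσb.prodMk_nhds hr)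
  have hfixed : Tendsto (fun i => jfun d (σ i) (r i) x E) l (𝓝 (jfun d σb rb x E)) := by
    simp only [jfun_eq_truncKer]
    exact (tendsto_setIntegral_truncKer hσ hσb hrb hr hEfin x).neg.sub hgam
  have hdomain : Tendsto (fun i => jfun d (σ i) (r i) x (En i) - jfun d (σ i) (r i) x E) l
      (𝓝 0) := by
    refine squeeze_zero_norm' ?_ (by simpa using hEnE.const_mul (kerBound d (rb / 2)))
    filter_upwards [hr.eventually_const_le (half_lt_self hrb)] with i hi
    exact norm_jfun_sub_jfun_le (hσ i) (half_pos hrb) hi (hEn i) hE (hEnfin i) hEfin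
  simpa using hdomain.add hfixed

theorem exists_eventually_norm_jfun_le (hσ : ∀ i, σ i ∈ Set.Icc (-(d : ℝ)) 1)
    (hσb : Tendsto σ l (𝓝 σb)) (hrb : 0 < rb) (hr : Tendsto r l (𝓝 rb))
    {E : Set (Rd d)} (hE : MeasurableSet E) (hEfin : volume E < ⊤)
    {En : ι → Set (Rd d)} (hEn : ∀ i, MeasurableSet (En i)) (hEnfin : ∀ i, volume (En i) < ⊤)
    (hEnE : Tendsto (fun i => volume.real (En i ∆ E)) l (𝓝 0)) :
    ∃ M, ∀ᶠ i in l, ∀ x, ‖jfun d (σ i) (r i) x (En i)‖ ≤ M := by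
  set C := kerBound d (rb / 2)
  have hgam := (continuousAt_gam d σb hrb).tendsto.comp (hσb.prodMk_nhds hr)
  have hbound : Tendsto (fun i => C * volume.real (En i ∆ E) + (C * volume.real E +
      ‖gam d (σ i) (r i)‖)) l (𝓝 (C * volume.real E + ‖gam d σb rb‖)) := by
    simpa using (hEnE.const_mul C).add (tendsto_const_nhds.add hgam.norm)
  refine ⟨C * volume.real E + ‖gam d σb rb‖ + 1, ?_⟩
  filter_upwards [hr.eventually_const_le (half_lt_self hrb),
    hbound.eventually_le_const (lt_add_one _)] with i hi hiM x
  have hdiff := norm_jfun_sub_jfun_le (x := x) (hσ i) (half_pos hrb) hi (hEn i) hE (hEnfin i) hEfin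
  have hfixed := norm_jfun_le (x := x) (hσ i) (half_pos hrb) hi hEfin
  linarith [norm_sub_norm_le (jfun d (σ i) (r i) x (En i)) (jfun d (σ i) (r i) x E)]

end Convergence

theorem j_and_Jhat_joint_continuity_general
    (d : ℕ)
    (σb : ℝ) (hσb1 : -(d : ℝ) < σb) (hσb2 : σb < 1) (rb : ℝ) (hrb : 0 < rb)
    (σ : ℕ → ℝ) (hσ : ∀ n, -(d : ℝ) < σ n ∧ σ n < 1) (hσconv : Tendsto σ atTop (𝓝 σb))
    (r : ℕ → ℝ) (hrconv : Tendsto r atTop (𝓝 rb))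
    (E : Set (Rd d)) (hE : MeasurableSet E) (hEfin : volume E < ⊤)
    (En : ℕ → Set (Rd d)) (hEn : ∀ n, MeasurableSet (En n))
    (hEnfin : ∀ n, volume (En n) < ⊤)
    (hconv : Tendsto (fun n => volume (En n ∆ E)) atTop (𝓝 0)) :
    (∀ x : Rd d,
      Tendsto (fun n => jfun d (σ n) (r n) x (En n)) atTop (𝓝 (jfun d σb rb x E))) ∧
    Tendsto (fun n => Jhat d (σ n) (r n) (En n)) atTop (𝓝 (Jhat d σb rb E)) := by
  have hσI : ∀ n, σ n ∈ Set.Icc (-(d : ℝ)) 1 := fun n => ⟨(hσ n).1.le, (hσ n).2.le⟩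
  have hEnE : Tendsto (fun n => volume.real (En n ∆ E)) atTop (𝓝 0) := by
    simpa [Function.comp_def, measureReal_def] using
      (ENNReal.tendsto_toReal ENNReal.zero_ne_top).comp hconv
  have hj := tendsto_jfun hσI hσconv hrb hrconv hE hEfin hEn hEnfin hEnE
  refine ⟨hj, ?_⟩
  obtain ⟨M, hM⟩ := exists_eventually_norm_jfun_le hσI hσconv hrb hrconv hE hEfin hEn hEnfin hEnE
  have hJhat : ∀ᶠ n in atTop,
      ∫ x in En n, jfun d (σ n) (r n) x (En n) = Jhat d (σ n) (r n) (En n) :=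
    (hrconv.eventually_const_lt hrb).mono fun n hn =>
      (Jhat_eq_setIntegral_jfun (hσI n) hn (hEnfin n)).symm
  rw [Jhat_eq_setIntegral_jfun ⟨hσb1.le, hσb2.le⟩ hrb hEfin]
  exact Tendsto.congr' hJhat <| tendsto_setIntegral_of_tendsto_measureReal_symmDiff
    (fun n => (measurable_jfun d (σ n) (r n) (En n)).aestronglyMeasurable) hM (fun x _ => hj x)
    hEn hE hEnfin hEfin hEnE

theorem j_and_Jhat_joint_continuity
    (d : ℕ) (hd : 1 ≤ d)
    (σb : ℝ) (hσb1 : -(d : ℝ) < σb) (hσb2 : σb < 1) (rb : ℝ) (hrb : 0 < rb)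
    (σ : ℕ → ℝ) (hσ : ∀ n, -(d : ℝ) < σ n ∧ σ n < 1) (hσconv : Tendsto σ atTop (𝓝 σb))
    (r : ℕ → ℝ) (hr : ∀ n, 0 < r n) (hrconv : Tendsto r atTop (𝓝 rb))
    (E : Set (Rd d)) (hE : MeasurableSet E) (hEfin : volume E < ⊤)
    (En : ℕ → Set (Rd d)) (hEn : ∀ n, MeasurableSet (En n))
    (hEnfin : ∀ n, volume (En n) < ⊤)
    (hconv : Tendsto (fun n => volume (En n ∆ E)) atTop (𝓝 0)) :
    (∀ x : Rd d,
      Tendsto (fun n => jfun d (σ n) (r n) x (En n)) atTop (𝓝 (jfun d σb rb x E))) ∧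
    Tendsto (fun n => Jhat d (σ n) (r n) (En n)) atTop (𝓝 (Jhat d σb rb E)) :=
  j_and_Jhat_joint_continuity_general d σb hσb1 hσb2 rb hrb σ hσ hσconv r hrconv E hE hEfin En hEn
    hEnfin hconv
end
end
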